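/- Let P be a B-subbimodule of F^2(T_B(U)) of PBW type, with P = {x − α(x) − β(x) : x ∈ R}, R = π(P). Then on the subspace (R ⊗_B U) ∩ (U ⊗_B R) of U^{⊗_B 3}: (i) the image of α⊗id − id⊗α lies in R; (ii) α ∘ (α⊗id − id⊗α) = −(β⊗id − id⊗β); (iii) β ∘ (α⊗id − id⊗α) = 0. -/

import Mathlib

/- We model the tensor algebra `T = T_B(U)` over `B` abstractly: `T` is an
ℕ-graded `k`-algebra with `B = 𝒜 0` and `U = 𝒜 1`; products in `T` realize
tensors, so an element of `(R ⊗_B U) ∩ (U ⊗_B R) ⊆ U^{⊗_B 3}` is an element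
of `T` admitting representations `Σ rᵢ·uᵢ = Σ u'ⱼ·r'ⱼ` with `rᵢ, r'ⱼ ∈ R`,
`uᵢ, u'ⱼ ∈ U`, and `(α⊗id − id⊗α)` acts as `Σ α(rᵢ)·uᵢ − Σ u'ⱼ·α(r'ⱼ)`. -/

def filt {k T : Type*} [CommSemiring k] [Ring T] [Algebra k T]
    (𝒜 : ℕ → Submodule k T) (m : ℕ) : Submodule k T :=
  ⨆ i ≤ m, 𝒜 i

/-- The leading homogeneous part of an element of a graded algebra. -/
noncomputable def LH {k T : Type*} [CommSemiring k] [Ring T] [Algebra k T]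
    (𝒜 : ℕ → Submodule k T) [GradedAlgebra 𝒜] (f : T) : T :=
  GradedAlgebra.proj 𝒜 (sSup {i | GradedAlgebra.proj 𝒜 i f ≠ 0}) f

def twoSidedSpan (k : Type*) {T : Type*} [CommSemiring k] [Ring T] [Algebra k T]
    (P : Set T) : Submodule k T :=
  Submodule.span k {x | ∃ a b : T, ∃ p ∈ P, x = a * p * b}

/-! Lift `Σ rᵢuᵢ = Σ u'ⱼr'ⱼ` to `q = Σ (rᵢ − αrᵢ − βrᵢ)uᵢ − Σ u'ⱼ(r'ⱼ − αr'ⱼ − βr'ⱼ)` in the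
ideal `⟨P⟩`. Its quadratic parts cancel, so `q = −(α⊗1 − 1⊗α) − (β⊗1 − 1⊗β)` lies in
`⟨P⟩ ∩ F²`, which the PBW property forces to be `P` (condition (J)): the leading part of any
element of `⟨P⟩` lies in `⟨R⟩`, whose elements have no component below degree 2 and have degree-2
component in `R`. Hence `q = x − αx − βx` for some `x ∈ R`, and comparing the homogeneous
components of degrees 2, 1, 0 gives (i), (ii), (iii). -/

open DirectSum GradedAlgebra

lemma sub_sub_mem_of_mem {k T : Type*} [CommRing k] [Ring T] [Algebra k T]
    {P R : Submodule k T} {α β : T →ₗ[k] T}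
    (hPdesc : (P : Set T) = {y | ∃ x ∈ R, y = x - α x - β x}) {x : T} (hx : x ∈ R) :
    x - α x - β x ∈ P := by
  rw [← SetLike.mem_coe, hPdesc]
  exact ⟨x, hx, rfl⟩

section Graded

variable {k T : Type*} [CommRing k] [Ring T] [Algebra k T]
variable (𝒜 : ℕ → Submodule k T)

lemma mem_filt_of_mem {i m : ℕ} {x : T} (hx : x ∈ 𝒜 i) (h : i ≤ m) : x ∈ filt 𝒜 m :=
  le_iSup₂ (f := fun i (_ : i ≤ m) => 𝒜 i) i h hx

variable [GradedAlgebra 𝒜]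

lemma proj_of_mem {i : ℕ} {x : T} (hx : x ∈ 𝒜 i) (n : ℕ) :
    proj 𝒜 n x = if i = n then x else 0 := by
  split_ifs with h
  · subst h; exact decompose_of_mem_same 𝒜 hx
  · rw [proj_apply, decompose_of_mem_ne 𝒜 hx h]

lemma proj_mem (n : ℕ) (x : T) : proj 𝒜 n x ∈ 𝒜 n :=
  (decompose 𝒜 x n).2

lemma proj_mul_mul_of_mem_zero {a b : T} (ha : a ∈ 𝒜 0) (hb : b ∈ 𝒜 0) (n : ℕ) (x : T) :
    proj 𝒜 n (a * x * b) = a * proj 𝒜 n x * b := by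
  rw [proj_apply, proj_apply, coe_decompose_mul_of_right_mem_zero 𝒜 hb,
    coe_decompose_mul_of_left_mem_zero 𝒜 ha]

lemma eq_of_add_add_eq_add_add {x₀ x₁ x₂ y₀ y₁ y₂ : T}
    (hx₀ : x₀ ∈ 𝒜 0) (hx₁ : x₁ ∈ 𝒜 1) (hx₂ : x₂ ∈ 𝒜 2)
    (hy₀ : y₀ ∈ 𝒜 0) (hy₁ : y₁ ∈ 𝒜 1) (hy₂ : y₂ ∈ 𝒜 2)
    (h : x₂ + x₁ + x₀ = y₂ + y₁ + y₀) : x₂ = y₂ ∧ x₁ = y₁ ∧ x₀ = y₀ := by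
  have hproj (n : ℕ) := congrArg (proj 𝒜 n) h
  simp only [map_add, proj_of_mem 𝒜 hx₀, proj_of_mem 𝒜 hx₁, proj_of_mem 𝒜 hx₂,
    proj_of_mem 𝒜 hy₀, proj_of_mem 𝒜 hy₁, proj_of_mem 𝒜 hy₂] at hproj
  exact ⟨by simpa using hproj 2, by simpa using hproj 1, by simpa using hproj 0⟩

lemma mem_filt_iff {m : ℕ} {x : T} : x ∈ filt 𝒜 m ↔ ∀ n, m < n → proj 𝒜 n x = 0 := by
  classical
  constructor
  · intro hx n hn
    suffices filt 𝒜 m ≤ LinearMap.ker (proj 𝒜 n) from this hx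
    refine iSup₂_le fun i hi y hy => ?_
    rw [LinearMap.mem_ker, proj_of_mem 𝒜 hy, if_neg (by omega)]
  · intro hx
    rw [← sum_support_decompose 𝒜 x]
    refine Submodule.sum_mem _ fun i hi => mem_filt_of_mem 𝒜 (decompose 𝒜 x i).2 ?_
    by_contra hmi
    exact DFinsupp.mem_support_iff.mp hi (Subtype.ext (hx i (by omega)))

lemma sub_proj_mem_filt {m : ℕ} {x : T} (hx : x ∈ filt 𝒜 (m + 1)) :
    x - proj 𝒜 (m + 1) x ∈ filt 𝒜 m := by
  rw [mem_filt_iff] at hx ⊢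
  intro n hn
  rw [map_sub, proj_of_mem 𝒜 (proj_mem 𝒜 _ x)]
  split_ifs with h
  · rw [h, sub_self]
  · rw [hx n (by omega), sub_zero]

lemma eq_zero_of_forall_proj_eq_zero {x : T} (h : ∀ n, proj 𝒜 n x = 0) : x = 0 :=
  (decompose 𝒜).injective <| by ext n; simpa using h n

lemma exists_LH_eq_proj {m : ℕ} {x : T} (hx : x ∈ filt 𝒜 m) (hx0 : x ≠ 0) :
    ∃ d ≤ m, proj 𝒜 d x ≠ 0 ∧ LH 𝒜 x = proj 𝒜 d x := by
  set S := {i | proj 𝒜 i x ≠ 0}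
  have hne : S.Nonempty := by
    by_contra hS
    exact hx0 (eq_zero_of_forall_proj_eq_zero 𝒜 fun n => by
      by_contra hn; exact hS ⟨n, hn⟩)
  have hbound : ∀ i ∈ S, i ≤ m := fun i hi => by
    by_contra hmi; exact hi ((mem_filt_iff 𝒜).mp hx i (by omega))
  exact ⟨sSup S, csSup_le hne hbound, Nat.sSup_mem hne ⟨m, hbound⟩, rfl⟩

lemma proj_proj (n : ℕ) (x : T) : proj 𝒜 n (proj 𝒜 n x) = proj 𝒜 n x := by
  rw [proj_of_mem 𝒜 (proj_mem 𝒜 n x), if_pos rfl]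

lemma mem_twoSidedSpan (a b : T) {S : Set T} {p : T} (hp : p ∈ S) :
    a * p * b ∈ twoSidedSpan k S :=
  Submodule.subset_span ⟨a, b, p, hp, rfl⟩

lemma subset_twoSidedSpan (S : Set T) : S ⊆ twoSidedSpan k S :=
  fun p hp => by simpa using mem_twoSidedSpan (k := k) 1 1 hp

lemma twoSidedSpan_le_of_homogeneous {S : Set T} {N : Submodule k T}
    (h : ∀ i j, ∀ a ∈ 𝒜 i, ∀ b ∈ 𝒜 j, ∀ s ∈ S, a * s * b ∈ N) : twoSidedSpan k S ≤ N := by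
  refine Submodule.span_le.mpr ?_
  rintro _ ⟨a, b, s, hs, rfl⟩
  change _ ∈ N
  induction a using DirectSum.Decomposition.inductionOn 𝒜 with
  | zero => simp
  | add a a' ha ha' => simpa only [add_mul] using N.add_mem ha ha'
  | homogeneous a =>
    induction b using DirectSum.Decomposition.inductionOn 𝒜 with
    | zero => simp
    | add b b' hb hb' => simpa only [mul_add] using N.add_mem hb hb'
    | homogeneous b => exact h _ _ _ a.2 _ b.2 s hs

lemma twoSidedSpan_le_ker_proj {S : Set T} {d n : ℕ} (hS : S ⊆ 𝒜 d) (hn : n < d) :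
    twoSidedSpan k S ≤ LinearMap.ker (proj 𝒜 n) :=
  twoSidedSpan_le_of_homogeneous 𝒜 fun i j a ha b hb s hs => by
    rw [LinearMap.mem_ker, proj_of_mem 𝒜 (SetLike.mul_mem_graded
      (SetLike.mul_mem_graded ha (hS hs)) hb), if_neg (by omega)]

lemma twoSidedSpan_le_comap_proj {M : Submodule k T} {d : ℕ} (hM : M ≤ 𝒜 d)
    (hbi : ∀ a ∈ 𝒜 0, ∀ b ∈ 𝒜 0, ∀ x ∈ M, a * x * b ∈ M) :
    twoSidedSpan k M ≤ M.comap (proj 𝒜 d) :=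
  twoSidedSpan_le_of_homogeneous 𝒜 fun i j a ha b hb s hs => by
    rw [Submodule.mem_comap, proj_of_mem 𝒜 (SetLike.mul_mem_graded
      (SetLike.mul_mem_graded ha (hM hs)) hb)]
    split_ifs with h
    · obtain ⟨rfl, rfl⟩ : i = 0 ∧ j = 0 := by omega
      exact hbi a ha b hb s hs
    · exact M.zero_mem

lemma map_proj_le (P : Submodule k T) (n : ℕ) : P.map (proj 𝒜 n) ≤ 𝒜 n :=
  Submodule.map_le_iff_le_comap.mpr fun p _ => proj_mem 𝒜 n p

lemma mul_mul_mem_map_proj {P : Submodule k T}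
    (hbi : ∀ a ∈ 𝒜 0, ∀ b ∈ 𝒜 0, ∀ x ∈ P, a * x * b ∈ P)
    (n : ℕ) {a b : T} (ha : a ∈ 𝒜 0) (hb : b ∈ 𝒜 0) {x : T} (hx : x ∈ P.map (proj 𝒜 n)) :
    a * x * b ∈ P.map (proj 𝒜 n) := by
  obtain ⟨p, hp, rfl⟩ := hx
  exact ⟨a * p * b, hbi a ha b hb p hp, proj_mul_mul_of_mem_zero 𝒜 ha hb n p⟩

end Graded

def IsPBW {k T : Type*} [CommRing k] [Ring T] [Algebra k T] (𝒜 : ℕ → Submodule k T)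
    [GradedAlgebra 𝒜] (P : Submodule k T) : Prop :=
  twoSidedSpan k ((proj 𝒜 2 : T →ₗ[k] T) '' (P : Set T)) =
    twoSidedSpan k (LH 𝒜 '' (twoSidedSpan k (P : Set T) : Set T))

section PBW

variable {k T : Type*} [CommRing k] [Ring T] [Algebra k T]
variable (𝒜 : ℕ → Submodule k T) [GradedAlgebra 𝒜] {P : Submodule k T}

lemma LH_mem_of_isPBW (hPBW : IsPBW 𝒜 P) {x : T} (hxP : x ∈ twoSidedSpan k (P : Set T)) :
    LH 𝒜 x ∈ twoSidedSpan k ((proj 𝒜 2 : T →ₗ[k] T) '' (P : Set T)) :=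
  hPBW ▸ subset_twoSidedSpan _ ⟨x, hxP, rfl⟩

lemma two_le_of_LH_eq_proj (hPBW : IsPBW 𝒜 P) {x : T}
    (hxP : x ∈ twoSidedSpan k (P : Set T)) {d : ℕ} (hd0 : proj 𝒜 d x ≠ 0)
    (hLH : LH 𝒜 x = proj 𝒜 d x) : 2 ≤ d := by
  by_contra! hd
  have := twoSidedSpan_le_ker_proj 𝒜 (map_proj_le 𝒜 P 2) hd (LH_mem_of_isPBW 𝒜 hPBW hxP)
  rw [LinearMap.mem_ker, hLH, proj_proj] at this
  exact hd0 this

lemma eq_zero_of_mem_twoSidedSpan_of_mem_filt_one (hPBW : IsPBW 𝒜 P) {x : T}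
    (hxP : x ∈ twoSidedSpan k (P : Set T)) (hx1 : x ∈ filt 𝒜 1) : x = 0 := by
  by_contra hx0
  obtain ⟨d, hd1, hd0, hLH⟩ := exists_LH_eq_proj 𝒜 hx1 hx0
  have := two_le_of_LH_eq_proj 𝒜 hPBW hxP hd0 hLH
  omega

lemma proj_two_mem_of_mem_twoSidedSpan_of_mem_filt_two
    (hbi : ∀ a ∈ 𝒜 0, ∀ b ∈ 𝒜 0, ∀ x ∈ P, a * x * b ∈ P)
    (hPBW : IsPBW 𝒜 P) {x : T} (hxP : x ∈ twoSidedSpan k (P : Set T)) (hx2 : x ∈ filt 𝒜 2) :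
    proj 𝒜 2 x ∈ P.map (proj 𝒜 2) := by
  rcases eq_or_ne x 0 with rfl | hx0
  · simp
  obtain ⟨d, hd2, hd0, hLH⟩ := exists_LH_eq_proj 𝒜 hx2 hx0
  obtain rfl : d = 2 := le_antisymm hd2 (two_le_of_LH_eq_proj 𝒜 hPBW hxP hd0 hLH)
  have := twoSidedSpan_le_comap_proj 𝒜 (map_proj_le 𝒜 P 2)
    (fun _ ha _ hb _ => mul_mul_mem_map_proj 𝒜 hbi 2 ha hb)
    (LH_mem_of_isPBW 𝒜 hPBW hxP)
  rwa [Submodule.mem_comap, hLH, proj_proj] at this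

lemma mem_of_mem_twoSidedSpan_of_mem_filt_two
    (hbi : ∀ a ∈ 𝒜 0, ∀ b ∈ 𝒜 0, ∀ x ∈ P, a * x * b ∈ P)
    (hPBW : IsPBW 𝒜 P) {α β : T →ₗ[k] T}
    (hα : ∀ x ∈ P.map (proj 𝒜 2), α x ∈ 𝒜 1) (hβ : ∀ x ∈ P.map (proj 𝒜 2), β x ∈ 𝒜 0)
    (hPdesc : (P : Set T) = {y | ∃ x ∈ P.map (proj 𝒜 2), y = x - α x - β x})
    {x : T} (hxP : x ∈ twoSidedSpan k (P : Set T)) (hx2 : x ∈ filt 𝒜 2) : x ∈ P := by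
  set r := proj 𝒜 2 x
  have hr : r ∈ P.map (proj 𝒜 2) :=
    proj_two_mem_of_mem_twoSidedSpan_of_mem_filt_two 𝒜 hbi hPBW hxP hx2
  have hp : r - α r - β r ∈ P := sub_sub_mem_of_mem hPdesc hr
  have hlow : x - (r - α r - β r) ∈ filt 𝒜 1 := by
    rw [show x - (r - α r - β r) = (x - r) + α r + β r by abel]
    exact add_mem (add_mem (sub_proj_mem_filt 𝒜 hx2) (mem_filt_of_mem 𝒜 (hα r hr) le_rfl))
      (mem_filt_of_mem 𝒜 (hβ r hr) zero_le_one)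
  have := eq_zero_of_mem_twoSidedSpan_of_mem_filt_one 𝒜 hPBW
    (sub_mem hxP (subset_twoSidedSpan _ hp)) hlow
  rwa [sub_eq_zero.mp this]

end PBW

theorem stmt15_general {k T : Type*} [Field k] [Ring T] [Algebra k T]
    (𝒜 : ℕ → Submodule k T) [GradedAlgebra 𝒜]
    (P : Submodule k T)
    (hbi : ∀ a ∈ 𝒜 0, ∀ b ∈ 𝒜 0, ∀ x ∈ P, a * x * b ∈ P)
    -- `P` is of PBW type: `⟨π(P)⟩ = ⟨LH(⟨P⟩)⟩`
    (hPBW : twoSidedSpan k ((GradedAlgebra.proj 𝒜 2 : T →ₗ[k] T) '' (P : Set T)) =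
      twoSidedSpan k (LH 𝒜 '' (twoSidedSpan k (P : Set T) : Set T)))
    -- the maps `α` and `β`, with values in `U = 𝒜 1` and `B = 𝒜 0` on `R`
    (α β : T →ₗ[k] T)
    (hα : ∀ x ∈ Submodule.map (GradedAlgebra.proj 𝒜 2) P, α x ∈ 𝒜 1)
    (hβ : ∀ x ∈ Submodule.map (GradedAlgebra.proj 𝒜 2) P, β x ∈ 𝒜 0)
    (hPdesc : (P : Set T) =
      {y | ∃ x ∈ Submodule.map (GradedAlgebra.proj 𝒜 2) P, y = x - α x - β x}) :
    ∀ (n m : ℕ) (r u : Fin n → T) (u' r' : Fin m → T),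
      (∀ i, r i ∈ Submodule.map (GradedAlgebra.proj 𝒜 2) P) →
      (∀ i, u i ∈ 𝒜 1) →
      (∀ j, u' j ∈ 𝒜 1) →
      (∀ j, r' j ∈ Submodule.map (GradedAlgebra.proj 𝒜 2) P) →
      (∑ i, r i * u i = ∑ j, u' j * r' j) →
      ((∑ i, α (r i) * u i - ∑ j, u' j * α (r' j)) ∈
          Submodule.map (GradedAlgebra.proj 𝒜 2) P ∧
        α (∑ i, α (r i) * u i - ∑ j, u' j * α (r' j)) =
          -(∑ i, β (r i) * u i - ∑ j, u' j * β (r' j)) ∧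
        β (∑ i, α (r i) * u i - ∑ j, u' j * α (r' j)) = 0) := by
  intro n m r u u' r' hr hu hu' hr' hsum
  set A := ∑ i, α (r i) * u i - ∑ j, u' j * α (r' j)
  set B := ∑ i, β (r i) * u i - ∑ j, u' j * β (r' j)
  have hA : A ∈ 𝒜 2 := sub_mem
    (sum_mem fun i _ => SetLike.mul_mem_graded (hα _ (hr i)) (hu i))
    (sum_mem fun j _ => SetLike.mul_mem_graded (hu' j) (hα _ (hr' j)))
  have hB : B ∈ 𝒜 1 := sub_mem
    (sum_mem fun i _ => by simpa using SetLike.mul_mem_graded (hβ _ (hr i)) (hu i))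
    (sum_mem fun j _ => by simpa using SetLike.mul_mem_graded (hu' j) (hβ _ (hr' j)))
  set q := ∑ i, (r i - α (r i) - β (r i)) * u i - ∑ j, u' j * (r' j - α (r' j) - β (r' j))
  have hqP : q ∈ twoSidedSpan k (P : Set T) := sub_mem
    (sum_mem fun i _ => by
      simpa using mem_twoSidedSpan (k := k) 1 (u i) (sub_sub_mem_of_mem hPdesc (hr i)))
    (sum_mem fun j _ => by
      simpa using mem_twoSidedSpan (k := k) (u' j) 1 (sub_sub_mem_of_mem hPdesc (hr' j)))
  have hq : q = -A - B := by
    simp only [q, A, B, sub_mul, mul_sub, Finset.sum_sub_distrib, hsum]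
    abel
  have hq2 : q ∈ filt 𝒜 2 := hq ▸ sub_mem (neg_mem (mem_filt_of_mem 𝒜 hA le_rfl))
    (mem_filt_of_mem 𝒜 hB one_le_two)
  have hqP' := mem_of_mem_twoSidedSpan_of_mem_filt_two 𝒜 hbi hPBW hα hβ hPdesc hqP hq2
  rw [← SetLike.mem_coe, hPdesc] at hqP'
  obtain ⟨x, hx, hqx⟩ := hqP'
  obtain ⟨hxA, hαx, hβx⟩ := eq_of_add_add_eq_add_add 𝒜 (neg_mem (hβ x hx))
    (neg_mem (hα x hx)) (map_proj_le 𝒜 P 2 hx) (zero_mem _) (neg_mem hB) (neg_mem hA)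
    (by simpa only [sub_eq_add_neg, add_zero] using hqx.symm.trans hq)
  have hAx : A = -x := by rw [hxA, neg_neg]
  rw [hAx, map_neg, map_neg]
  exact ⟨neg_mem hx, hαx, hβx⟩

/-- let `P` be a `B`-subbimodule of `F²(T)` of PBW type, with
lower-order-term maps `α : R → U`, `β : R → B` (so
`P = {x − α(x) − β(x) : x ∈ R}`, `R = π(P)`).  Then on
`(R ⊗_B U) ∩ (U ⊗_B R)`:
(i) the image of `α⊗id − id⊗α` lies in `R`;
(ii) `α ∘ (α⊗id − id⊗α) = −(β⊗id − id⊗β)`;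
(iii) `β ∘ (α⊗id − id⊗α) = 0`. -/
theorem stmt15 {k T : Type*} [Field k] [Ring T] [Algebra k T]
    (𝒜 : ℕ → Submodule k T) [GradedAlgebra 𝒜]
    (P : Submodule k T) (hP2 : P ≤ filt 𝒜 2)
    (hbi : ∀ a ∈ 𝒜 0, ∀ b ∈ 𝒜 0, ∀ x ∈ P, a * x * b ∈ P)
    -- `P` is of PBW type: `⟨π(P)⟩ = ⟨LH(⟨P⟩)⟩`
    (hPBW : twoSidedSpan k ((GradedAlgebra.proj 𝒜 2 : T →ₗ[k] T) '' (P : Set T)) =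
      twoSidedSpan k (LH 𝒜 '' (twoSidedSpan k (P : Set T) : Set T)))
    -- the maps `α` and `β`, with values in `U = 𝒜 1` and `B = 𝒜 0` on `R`
    (α β : T →ₗ[k] T)
    (hα : ∀ x ∈ Submodule.map (GradedAlgebra.proj 𝒜 2) P, α x ∈ 𝒜 1)
    (hβ : ∀ x ∈ Submodule.map (GradedAlgebra.proj 𝒜 2) P, β x ∈ 𝒜 0)
    (hαβbi : ∀ a ∈ 𝒜 0, ∀ b ∈ 𝒜 0, ∀ x ∈ Submodule.map (GradedAlgebra.proj 𝒜 2) P,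
      α (a * x * b) = a * α x * b ∧ β (a * x * b) = a * β x * b)
    (hPdesc : (P : Set T) =
      {y | ∃ x ∈ Submodule.map (GradedAlgebra.proj 𝒜 2) P, y = x - α x - β x}) :
    ∀ (n m : ℕ) (r u : Fin n → T) (u' r' : Fin m → T),
      (∀ i, r i ∈ Submodule.map (GradedAlgebra.proj 𝒜 2) P) →
      (∀ i, u i ∈ 𝒜 1) →
      (∀ j, u' j ∈ 𝒜 1) →
      (∀ j, r' j ∈ Submodule.map (GradedAlgebra.proj 𝒜 2) P) →
      (∑ i, r i * u i = ∑ j, u' j * r' j) →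
      ((∑ i, α (r i) * u i - ∑ j, u' j * α (r' j)) ∈
          Submodule.map (GradedAlgebra.proj 𝒜 2) P ∧
        α (∑ i, α (r i) * u i - ∑ j, u' j * α (r' j)) =
          -(∑ i, β (r i) * u i - ∑ j, u' j * β (r' j)) ∧
        β (∑ i, α (r i) * u i - ∑ j, u' j * α (r' j)) = 0) :=
  stmt15_general 𝒜 P hbi hPBW α β hα hβ hPdesc
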